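/- arXiv:0809.1489 — 9 statements merged into one kernel-verified Lean document; each statement's English description precedes it below -/
import Mathlib

section
/- Let A be a nonnegative m×n matrix and x' a nonnegative vector such that for every row i and every pair of distinct column indices u,v with a_{iu},a_{iv} > 0 we have a_{iu}x'_u + a_{iv}x'_v ≤ 1. Suppose each row of A has at least 2 and at most Δ positive entries. Define x_v = 2x'_v / max{|supp(a_i)| : a_{iv} > 0}, where supp(a_i) denotes the set of columns with positive entries in row i. Then x satisfies A x ≤ 1 (componentwise). -/
/-!
Fix a row `i` with support `S`, `k = |S| ≥ 2`, and put `f v = a_{iv} x'_v`. Summing the pairwise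
constraints `f u + f v ≤ 1` over all ordered pairs of distinct `u, v ∈ S` counts every `f v`
exactly `2 (k - 1)` times, so `Σ_{v ∈ S} f v ≤ k / 2`. Each `v ∈ S` is scaled by
`2 / max{…} ≤ 2 / k`, hence `Σ_v a_{iv} x_v ≤ (2 / k) · (k / 2) = 1`.
-/

open Finset

theorem Finset.sum_sum_erase_add {α : Type*} [DecidableEq α] (S : Finset α) (f : α → ℝ) :
    ∑ u ∈ S, ∑ v ∈ S.erase u, (f u + f v) = 2 * ((#S : ℝ) - 1) * ∑ v ∈ S, f v := by
  have hrow : ∀ u ∈ S, ∑ v ∈ S.erase u, (f u + f v)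
      = ((#S : ℝ) - 1) * f u + (∑ v ∈ S, f v - f u) := fun u hu => by
    rw [sum_add_distrib, sum_const, nsmul_eq_mul, card_erase_of_mem hu,
      Nat.cast_pred (card_pos.mpr ⟨u, hu⟩), sum_erase_eq_sub hu]
  rw [sum_congr rfl hrow, sum_add_distrib, sum_sub_distrib, ← mul_sum, sum_const, nsmul_eq_mul]
  ring

theorem Finset.sum_le_card_div_two_of_add_le_one {α : Type*} {S : Finset α} {f : α → ℝ}
    (hS : 2 ≤ #S) (hpair : ∀ u ∈ S, ∀ v ∈ S, u ≠ v → f u + f v ≤ 1) :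
    ∑ v ∈ S, f v ≤ #S / 2 := by
  classical
  have hk : (2 : ℝ) ≤ #S := by exact_mod_cast hS
  have hdouble : 2 * ((#S : ℝ) - 1) * ∑ v ∈ S, f v ≤ #S * ((#S : ℝ) - 1) := by
    calc 2 * ((#S : ℝ) - 1) * ∑ v ∈ S, f v = ∑ u ∈ S, ∑ v ∈ S.erase u, (f u + f v) :=
          (S.sum_sum_erase_add f).symm
      _ ≤ ∑ u ∈ S, ∑ v ∈ S.erase u, (1 : ℝ) := by
          gcongr with u hu v hv
          exact hpair u hu v (mem_of_mem_erase hv) (ne_of_mem_erase hv).symm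
      _ = #S * ((#S : ℝ) - 1) := by
          rw [sum_congr rfl fun u hu => by
            rw [sum_const, card_erase_of_mem hu, nsmul_one, Nat.cast_pred (by omega)]]
          rw [sum_const, nsmul_eq_mul]
  nlinarith

/-- Degree-reduction transformation for max-min LPs: feasibility of the
scaled-back solution.  `A` is a nonnegative `m × n` matrix, `x'` a nonnegative
vector satisfying all pairwise constraints `a_{iu} x'_u + a_{iv} x'_v ≤ 1`;
every row of `A` has between `2` and `Δ` positive entries.  The vector
`x_v = 2 x'_v / max{|supp(a_i)| : a_{iv} > 0}` satisfies `A x ≤ 1`. -/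
theorem stmt_0 (m n Δ : ℕ) (A : Fin m → Fin n → ℝ) (x' x : Fin n → ℝ)
    (hA : ∀ i v, 0 ≤ A i v)
    (hx' : ∀ v, 0 ≤ x' v)
    (hsupp : ∀ i, 2 ≤ (univ.filter (fun v => 0 < A i v)).card ∧
      (univ.filter (fun v => 0 < A i v)).card ≤ Δ)
    (hpair : ∀ i (u v : Fin n), u ≠ v → 0 < A i u → 0 < A i v →
      A i u * x' u + A i v * x' v ≤ 1)
    (hx : ∀ v, x v = 2 * x' v /
      (((univ.filter (fun i => 0 < A i v)).sup
        (fun i => (univ.filter (fun u => 0 < A i u)).card) : ℕ) : ℝ)) :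
    ∀ i, ∑ v, A i v * x v ≤ 1 := by
  intro i
  set S := univ.filter (fun v => 0 < A i v)
  have hS : 2 ≤ #S := (hsupp i).1
  have hk : (0 : ℝ) < #S := by exact_mod_cast (show 0 < #S by omega)
  have hrow : ∑ v ∈ S, A i v * x' v ≤ #S / 2 :=
    sum_le_card_div_two_of_add_le_one hS fun u hu v hv huv =>
      hpair i u v huv (mem_filter.mp hu).2 (mem_filter.mp hv).2
  have hscale : ∀ v ∈ S, x v ≤ 2 * x' v / #S := fun v hv => by
    rw [hx v]
    have hmax := le_sup (s := univ.filter fun j => 0 < A j v)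
      (f := fun j => #(univ.filter fun u => 0 < A j u))
      (mem_filter.mpr ⟨mem_univ i, (mem_filter.mp hv).2⟩)
    exact div_le_div_of_nonneg_left (by linarith [hx' v]) hk (by exact_mod_cast hmax)
  calc ∑ v, A i v * x v = ∑ v ∈ S, A i v * x v :=
        (sum_filter_of_ne fun v _ h => (hA i v).lt_of_ne (left_ne_zero_of_mul h).symm).symm
    _ ≤ ∑ v ∈ S, A i v * (2 * x' v / #S) := by
        gcongr with v hv
        · exact hA i v
        · exact hscale v hv
    _ = 2 / #S * ∑ v ∈ S, A i v * x' v := by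
        rw [mul_sum]
        exact sum_congr rfl fun v _ => by ring
    _ ≤ 2 / #S * (#S / 2) := by gcongr
    _ = 1 := by field_simp
end

section
/- Consider a max-min LP in which some agent v is adjacent to more than one objective. Replace v by |K_v| copies, one for each objective k ∈ K_v, replacing each constraint containing v by |K_v| copies each containing a distinct copy of v (coefficients unchanged). Then the optimum of the transformed instance equals the optimum of the original instance. -/
/-!
A feasible solution of the original instance gives a feasible solution of the split instance with
the same utility by giving every copy of `v₀` the value of `v₀`. Conversely, giving `v₀` the
largest value of its copies keeps every constraint satisfied (each split constraint already
bounds that copy) and does not decrease any objective, since the coefficients are nonnegative.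
Scaling a solution shows that the achievable utilities of a max-min LP are closed downwards
within `[0, ∞)`, so the two instances achieve exactly the same utilities.
-/

open Finset

namespace MaxMinLP

section Values

variable {V I K : Type*} [Fintype V] [Fintype K] [Nonempty K]

def values (A : I → V → ℝ) (C : K → V → ℝ) : Set ℝ :=
  {w | ∃ x : V → ℝ, (∀ v, 0 ≤ x v) ∧ (∀ i, ∑ v, A i v * x v ≤ 1) ∧
    w = univ.inf' univ_nonempty (fun k => ∑ v, C k v * x v)}

theorem mem_values_of_le {A : I → V → ℝ} {C : K → V → ℝ} {w w' : ℝ}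
    (hw : w ∈ values A C) (hw'0 : 0 ≤ w') (hw' : w' ≤ w) : w' ∈ values A C := by
  obtain ⟨x, hx0, hxA, rfl⟩ := hw
  set w := univ.inf' univ_nonempty (fun k => ∑ v, C k v * x v)
  have hw0 : 0 ≤ w := hw'0.trans hw'
  -- `t = w' / w` rescales `w` to `w'`, also when `w = 0` (then `w' = 0 = t`).
  set t := w' / w
  have ht0 : 0 ≤ t := div_nonneg hw'0 hw0
  have ht1 : t ≤ 1 := div_le_one_of_le₀ hw' hw0
  have htw : t * w = w' := by
    rcases hw0.eq_or_lt with h | h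
    · simp [t, ← h, le_antisymm (h ▸ hw') hw'0]
    · exact div_mul_cancel₀ _ h.ne'
  refine ⟨fun v => t * x v, fun v => mul_nonneg ht0 (hx0 v), fun i => ?_, ?_⟩
  · calc ∑ v, A i v * (t * x v) = t * ∑ v, A i v * x v := by
          rw [mul_sum]; exact sum_congr rfl fun v _ => by ring
      _ ≤ t * 1 := mul_le_mul_of_nonneg_left (hxA i) ht0
      _ ≤ 1 := by linarith
  · calc w' = t * w := htw.symm
      _ = univ.inf' univ_nonempty (fun k => t * ∑ v, C k v * x v) :=
          apply_inf'_eq_inf'_comp _ (t * ·) fun a b => mul_min_of_nonneg a b ht0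
      _ = _ := inf'_congr _ rfl fun k _ => by
          rw [mul_sum]; exact sum_congr rfl fun v _ => by ring

end Values

section SpreadMerge

variable {V κ : Type*}

def spread (v₀ : V) (x : V → ℝ) : {u : V // u ≠ v₀} ⊕ κ → ℝ :=
  Sum.elim (fun u => x u) (fun _ => x v₀)

variable [DecidableEq V] {v₀ : V}

noncomputable def merge (v₀ : V) (y : {u : V // u ≠ v₀} ⊕ κ → ℝ) : V → ℝ :=
  fun v => if h : v = v₀ then ⨆ k, y (Sum.inr k) else y (Sum.inl ⟨v, h⟩)

variable [Fintype V]

theorem sum_mul_merge (a : V → ℝ) (y : {u : V // u ≠ v₀} ⊕ κ → ℝ) :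
    ∑ v, a v * merge v₀ y v =
      ∑ u : {u : V // u ≠ v₀}, a u * y (Sum.inl u) + a v₀ * ⨆ k, y (Sum.inr k) := by
  rw [Fintype.sum_eq_add_sum_subtype_ne _ v₀, add_comm]
  congr 1
  · exact sum_congr rfl fun u _ => by rw [merge, dif_neg u.2]
  · rw [merge, dif_pos rfl]

theorem sum_mul_merge_le [Finite κ] [Nonempty κ] {a : V → ℝ}
    {y : {u : V // u ≠ v₀} ⊕ κ → ℝ} {b : ℝ}
    (h : ∀ k, ∑ u : {u : V // u ≠ v₀}, a u * y (Sum.inl u) + a v₀ * y (Sum.inr k) ≤ b) :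
    ∑ v, a v * merge v₀ y v ≤ b := by
  obtain ⟨k, hk⟩ := exists_eq_ciSup_of_finite (f := fun k => y (Sum.inr k))
  rw [sum_mul_merge, ← hk]
  exact h k

end SpreadMerge

section Copies

variable {K : Type*} [Fintype K] [DecidableEq K] {c : K → ℝ}

theorem sum_ite_mul_copies (k : K) (z : {k' : K // 0 < c k'} → ℝ) :
    ∑ k' : {k' : K // 0 < c k'}, (if k'.1 = k then c k else 0) * z k' =
      if h : 0 < c k then c k * z ⟨k, h⟩ else 0 := by
  split_ifs with h
  · rw [sum_eq_single ⟨k, h⟩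
      (fun k' _ hk' => by rw [if_neg fun e => hk' (Subtype.ext e), zero_mul])
      (fun h' => absurd (mem_univ _) h'), if_pos rfl]
  · exact sum_eq_zero fun k' _ => by rw [if_neg fun e : k'.1 = k => h (e ▸ k'.2), zero_mul]

theorem sum_ite_mul_copies_const (hc : ∀ k, 0 ≤ c k) (k : K) (t : ℝ) :
    ∑ k' : {k' : K // 0 < c k'}, (if k'.1 = k then c k else 0) * t = c k * t := by
  rw [sum_ite_mul_copies k fun _ => t]
  split_ifs with h
  · rfl
  · rw [(not_lt.mp h).antisymm (hc k), zero_mul]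

theorem sum_ite_mul_copies_le (hc : ∀ k, 0 ≤ c k) (k : K) {z : {k' : K // 0 < c k'} → ℝ}
    {M : ℝ} (hM : 0 ≤ M) (hz : ∀ k', z k' ≤ M) :
    ∑ k' : {k' : K // 0 < c k'}, (if k'.1 = k then c k else 0) * z k' ≤ c k * M := by
  rw [sum_ite_mul_copies k z]
  split_ifs with h
  · exact mul_le_mul_of_nonneg_left (hz _) h.le
  · exact mul_nonneg (hc k) hM

end Copies

section Splitting

variable {V I K : Type*} [Fintype V] [DecidableEq V] [Fintype K] [DecidableEq K] [Nonempty K]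

def splitValues (A : I → V → ℝ) (C : K → V → ℝ) (v₀ : V) : Set ℝ :=
  {w | ∃ x : ({u : V // u ≠ v₀} ⊕ {k : K // 0 < C k v₀}) → ℝ,
    (∀ v, 0 ≤ x v) ∧
    (∀ p : I × {k : K // 0 < C k v₀},
      (∑ u : {u : V // u ≠ v₀}, A p.1 u.1 * x (Sum.inl u)) + A p.1 v₀ * x (Sum.inr p.2) ≤ 1) ∧
    w = univ.inf' univ_nonempty (fun k =>
      (∑ u : {u : V // u ≠ v₀}, C k u.1 * x (Sum.inl u)) +
      (∑ k' : {k' : K // 0 < C k' v₀}, (if k'.1 = k then C k v₀ else 0) * x (Sum.inr k')))}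

variable {A : I → V → ℝ} {C : K → V → ℝ}

theorem values_subset_splitValues (hC : ∀ k v, 0 ≤ C k v) (v₀ : V) :
    values A C ⊆ splitValues A C v₀ := by
  rintro _ ⟨x, hx0, hxA, rfl⟩
  refine ⟨spread v₀ x, ?_, fun p => ?_, inf'_congr _ rfl fun k _ => ?_⟩
  · rintro (u | k) <;> exact hx0 _
  · simpa [spread, Fintype.sum_eq_add_sum_subtype_ne _ v₀, add_comm] using hxA p.1
  · simp only [spread, Sum.elim_inl, Sum.elim_inr]
    rw [sum_ite_mul_copies_const (fun k => hC k v₀), Fintype.sum_eq_add_sum_subtype_ne _ v₀,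
      add_comm]

theorem splitValues_subset_values (hC : ∀ k v, 0 ≤ C k v) {v₀ : V}
    [Nonempty {k : K // 0 < C k v₀}] : splitValues A C v₀ ⊆ values A C := by
  rintro _ ⟨y, hy0, hyA, rfl⟩
  set M := ⨆ k, y (Sum.inr k)
  have hM : 0 ≤ M := Real.iSup_nonneg fun k => hy0 _
  have hyM : ∀ k, y (Sum.inr k) ≤ M := le_ciSup (Finite.bddAbove_range _)
  have hmerge0 : ∀ v, 0 ≤ merge v₀ y v := fun v => by
    unfold merge
    split_ifs
    exacts [hM, hy0 _]
  have hmergeA : ∀ i, ∑ v, A i v * merge v₀ y v ≤ 1 := fun i =>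
    sum_mul_merge_le fun k => hyA (i, k)
  refine mem_values_of_le ⟨merge v₀ y, hmerge0, hmergeA, rfl⟩ (le_inf' _ _ fun k _ => ?_)
    (le_inf' _ _ fun k _ => inf'_le_of_le _ (mem_univ k) ?_)
  · refine add_nonneg (sum_nonneg fun u _ => mul_nonneg (hC _ _) (hy0 _))
      (sum_nonneg fun k' _ => mul_nonneg ?_ (hy0 _))
    split_ifs
    exacts [hC _ _, le_rfl]
  · rw [sum_mul_merge]
    exact add_le_add le_rfl (sum_ite_mul_copies_le (fun k => hC k v₀) k hM hyM)

end Splitting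

end MaxMinLP

theorem stmt_2_general {V I K : Type*} [Fintype V] [Fintype K]
    [DecidableEq V] [DecidableEq K] [Nonempty K]
    (A : I → V → ℝ) (C : K → V → ℝ)
    (hC : ∀ k v, 0 ≤ C k v)
    (v₀ : V) (hmulti : 1 < Fintype.card {k : K // 0 < C k v₀}) :
    sSup {w : ℝ | ∃ x : V → ℝ, (∀ v, 0 ≤ x v) ∧
        (∀ i, ∑ v, A i v * x v ≤ 1) ∧
        w = univ.inf' univ_nonempty (fun k => ∑ v, C k v * x v)} =
    sSup {w : ℝ | ∃ x : ({u : V // u ≠ v₀} ⊕ {k : K // 0 < C k v₀}) → ℝ,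
        (∀ v, 0 ≤ x v) ∧
        (∀ p : I × {k : K // 0 < C k v₀},
          (∑ u : {u : V // u ≠ v₀}, A p.1 u.1 * x (Sum.inl u)) +
            A p.1 v₀ * x (Sum.inr p.2) ≤ 1) ∧
        w = univ.inf' univ_nonempty (fun k =>
          (∑ u : {u : V // u ≠ v₀}, C k u.1 * x (Sum.inl u)) +
          (∑ k' : {k' : K // 0 < C k' v₀},
            (if k'.1 = k then C k v₀ else 0) * x (Sum.inr k')))} := by
  have : Nonempty {k : K // 0 < C k v₀} := Fintype.card_pos_iff.mp (by omega)
  exact congrArg sSup <| (MaxMinLP.values_subset_splitValues hC v₀).antisymm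
    (MaxMinLP.splitValues_subset_values hC)

/-- Splitting an agent `v₀` adjacent to several objectives into one copy per
adjacent objective (each constraint containing `v₀` being replaced by one copy
per objective, coefficients unchanged) preserves the optimum of the max-min LP.
The optimum is expressed as the supremum of achievable utilities
`min_k Σ_v c_{kv} x_v` over feasible solutions (`A x ≤ 1`, `x ≥ 0`). -/
theorem stmt_2 {V I K : Type*} [Fintype V] [Fintype I] [Fintype K]
    [DecidableEq V] [DecidableEq K] [Nonempty K]
    (A : I → V → ℝ) (C : K → V → ℝ)
    (hA : ∀ i v, 0 ≤ A i v) (hC : ∀ k v, 0 ≤ C k v)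
    (v₀ : V) (hmulti : 1 < Fintype.card {k : K // 0 < C k v₀}) :
    sSup {w : ℝ | ∃ x : V → ℝ, (∀ v, 0 ≤ x v) ∧
        (∀ i, ∑ v, A i v * x v ≤ 1) ∧
        w = univ.inf' univ_nonempty (fun k => ∑ v, C k v * x v)} =
    sSup {w : ℝ | ∃ x : ({u : V // u ≠ v₀} ⊕ {k : K // 0 < C k v₀}) → ℝ,
        (∀ v, 0 ≤ x v) ∧
        (∀ p : I × {k : K // 0 < C k v₀},
          (∑ u : {u : V // u ≠ v₀}, A p.1 u.1 * x (Sum.inl u)) +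
            A p.1 v₀ * x (Sum.inr p.2) ≤ 1) ∧
        w = univ.inf' univ_nonempty (fun k =>
          (∑ u : {u : V // u ≠ v₀}, C k u.1 * x (Sum.inl u)) +
          (∑ k' : {k' : K // 0 < C k' v₀},
            (if k'.1 = k then C k v₀ else 0) * x (Sum.inr k')))} :=
  stmt_2_general A C hC v₀ hmulti
end

section
/- Let T be a finite tree with node levels as in the alternating tree A_u: agents at levels congruent to 1 or 3 mod 4, objectives at levels ≡ 0 mod 4, constraints at levels ≡ 2 mod 4, with the constraints as leaves, such that every objective of the ambient instance adjacent (in the ambient graph) to an agent of T appears in T with all its adjacent agents. Then any feasible solution of the ambient max-min LP restricts to a feasible solution of the max-min LP associated with T, and hence the optimum of the max-min LP on T is an upper bound on the utility of any feasible solution of the ambient max-min LP. -/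
open Finset

/-- Restriction to a finite alternating subtree `T` (given by finite sets `VT`,
`IT`, `KT` of agents, constraints and objectives with levels satisfying the
mod-4 pattern, whose agents are all covered by constraints of `T` — the leaves
of `T` are constraints — and such that every objective of `T` appears with all
its adjacent agents): any feasible solution of the ambient max-min LP
(each constraint having exactly two agents, unit objective coefficients)
restricts to a feasible solution of the max-min LP associated with `T`, and
hence the optimum of the max-min LP on `T` bounds from above the utility of
any feasible solution of the ambient instance. -/
theorem stmt_4 {V I K : Type*} [DecidableEq V]
    (p : I → V × V) (a : I → ℝ × ℝ)
    (kOf : V → K) (Vk : K → Finset V)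
    (hVk : ∀ k v, v ∈ Vk k ↔ kOf v = k)
    (ha : ∀ i, 0 < (a i).1 ∧ 0 < (a i).2)
    (VT : Finset V) (IT : Finset I) (KT : Finset K)
    (hKTne : KT.Nonempty)
    (lvlV : V → ℤ) (lvlI : I → ℤ) (lvlK : K → ℤ)
    (hlvlV : ∀ v ∈ VT, lvlV v % 4 = 1 ∨ lvlV v % 4 = 3)
    (hlvlI : ∀ i ∈ IT, lvlI i % 4 = 2)
    (hlvlK : ∀ k ∈ KT, lvlK k % 4 = 0)
    (hclosedK : ∀ v ∈ VT, kOf v ∈ KT)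
    (hclosedV : ∀ k ∈ KT, ∀ v ∈ Vk k, v ∈ VT)
    (hcover : ∀ v ∈ VT, ∃ i ∈ IT, (p i).1 = v ∨ (p i).2 = v)
    (x : V → ℝ) (ω : ℝ)
    (hx0 : ∀ v, 0 ≤ x v)
    (hfeas : ∀ i, (a i).1 * x (p i).1 + (a i).2 * x (p i).2 ≤ 1)
    (hω : ∀ k, ω ≤ ∑ v ∈ Vk k, x v) :
    ((∀ v ∈ VT, 0 ≤ x v) ∧
      (∀ i ∈ IT, (if (p i).1 ∈ VT then (a i).1 * x (p i).1 else 0) +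
        (if (p i).2 ∈ VT then (a i).2 * x (p i).2 else 0) ≤ 1)) ∧
    ω ≤ sSup {w : ℝ | ∃ y : V → ℝ, (∀ v ∈ VT, 0 ≤ y v) ∧
        (∀ i ∈ IT, (if (p i).1 ∈ VT then (a i).1 * y (p i).1 else 0) +
          (if (p i).2 ∈ VT then (a i).2 * y (p i).2 else 0) ≤ 1) ∧
        ∀ k ∈ KT, w ≤ ∑ v ∈ Vk k, y v} := by
  have hfeasT : ∀ y : V → ℝ, (∀ v ∈ VT, 0 ≤ y v) →
      (∀ i ∈ IT, (if (p i).1 ∈ VT then (a i).1 * y (p i).1 else 0) +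
        (if (p i).2 ∈ VT then (a i).2 * y (p i).2 else 0) ≤ 1) → True := fun _ _ _ => trivial
  refine ⟨⟨fun v _ => hx0 v, ?_⟩, ?_⟩
  · intro i _
    have h := hfeas i
    have h1 : (if (p i).1 ∈ VT then (a i).1 * x (p i).1 else 0) ≤ (a i).1 * x (p i).1 := by
      split
      · exact le_rfl
      · exact mul_nonneg (ha i).1.le (hx0 _)
    have h2 : (if (p i).2 ∈ VT then (a i).2 * x (p i).2 else 0) ≤ (a i).2 * x (p i).2 := by
      split
      · exact le_rfl
      · exact mul_nonneg (ha i).2.le (hx0 _)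
    linarith
  · choose f hfIT hfp using hcover
    classical
    set b : V → ℝ := fun v => if h : v ∈ VT then
      max (1/(a (f v h)).1) (1/(a (f v h)).2) else 0 with hb
    obtain ⟨k0, hk0⟩ := hKTne
    have hbdd : BddAbove {w : ℝ | ∃ y : V → ℝ, (∀ v ∈ VT, 0 ≤ y v) ∧
        (∀ i ∈ IT, (if (p i).1 ∈ VT then (a i).1 * y (p i).1 else 0) +
          (if (p i).2 ∈ VT then (a i).2 * y (p i).2 else 0) ≤ 1) ∧
        ∀ k ∈ KT, w ≤ ∑ v ∈ Vk k, y v} := by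
      refine ⟨∑ v ∈ Vk k0, b v, ?_⟩
      rintro w ⟨y, hy0, hyfeas, hyk⟩
      have key : ∀ v ∈ Vk k0, y v ≤ b v := by
        intro v hv
        have hvT : v ∈ VT := hclosedV k0 hk0 v hv
        have hj := hyfeas (f v hvT) (hfIT v hvT)
        have hbv : b v = max (1/(a (f v hvT)).1) (1/(a (f v hvT)).2) := by
          simp [hb, hvT]
        rw [hbv]
        rcases hfp v hvT with hp1 | hp2
        · have e1 : (if (p (f v hvT)).1 ∈ VT then (a (f v hvT)).1 * y (p (f v hvT)).1 else 0)
              = (a (f v hvT)).1 * y v := by rw [hp1]; simp [hvT]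
          have e2 : 0 ≤ (if (p (f v hvT)).2 ∈ VT then (a (f v hvT)).2 * y (p (f v hvT)).2 else 0) := by
            split
            · exact mul_nonneg (ha _).2.le (hy0 _ (by assumption))
            · exact le_rfl
          have : (a (f v hvT)).1 * y v ≤ 1 := by rw [e1] at hj; linarith
          have hyv : y v ≤ 1 / (a (f v hvT)).1 :=
            (le_div_iff₀ (ha _).1).2 (by linarith [this, mul_comm (a (f v hvT)).1 (y v)])
          exact hyv.trans (le_max_left _ _)
        · have e1 : (if (p (f v hvT)).2 ∈ VT then (a (f v hvT)).2 * y (p (f v hvT)).2 else 0)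
              = (a (f v hvT)).2 * y v := by rw [hp2]; simp [hvT]
          have e2 : 0 ≤ (if (p (f v hvT)).1 ∈ VT then (a (f v hvT)).1 * y (p (f v hvT)).1 else 0) := by
            split
            · exact mul_nonneg (ha _).1.le (hy0 _ (by assumption))
            · exact le_rfl
          have : (a (f v hvT)).2 * y v ≤ 1 := by rw [e1] at hj; linarith
          have hyv : y v ≤ 1 / (a (f v hvT)).2 :=
            (le_div_iff₀ (ha _).2).2 (by linarith [this, mul_comm (a (f v hvT)).2 (y v)])
          exact hyv.trans (le_max_right _ _)
      exact (hyk k0 hk0).trans (Finset.sum_le_sum key)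
    refine le_csSup hbdd ?_
    refine ⟨x, fun v _ => hx0 v, ?_, fun k _ => hω k⟩
    intro i _
    have h := hfeas i
    have h1 : (if (p i).1 ∈ VT then (a i).1 * x (p i).1 else 0) ≤ (a i).1 * x (p i).1 := by
      split
      · exact le_rfl
      · exact mul_nonneg (ha i).1.le (hx0 _)
    have h2 : (if (p i).2 ∈ VT then (a i).2 * x (p i).2 else 0) ≤ (a i).2 * x (p i).2 := by
      split
      · exact le_rfl
      · exact mul_nonneg (ha i).2.le (hx0 _)
    linarith
end

section
/- Define recursively, for a feasibility parameter ω ≥ 0, f^+_{u,v,0}(ω) = min_{i∈I_v} a_{iv}^{-1} for agents v at the deepest agent level of the alternating tree A_u; f^-_{u,v,d}(ω) = max(0, ω − Σ_{w∈V_{k(v)}\{v}} f^+_{u,w,d}(ω)); and f^+_{u,v,d}(ω) = min_{i∈I_v} a_{iv}^{-1}(1 − a_{i,p(v,i)} f^-_{u,p(v,i),d−1}(ω)) where p(v,i) is the other agent of constraint i. Then for any feasible solution x of the max-min LP associated with A_u achieving objective value ω, and all d = 0,…,r: 0 ≤ x_v ≤ f^+_{u,v,d}(ω) for agents v at level 4(r−d)+1,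 and f^-_{u,v,d}(ω) ≤ x_v ≤ min_{i∈I_v} a_{iv}^{-1} for agents v at level 4(r−d)−1. -/
open Finset

/-- The sandwich lemma for the alternating-tree recursion: for any feasible
solution `x` of the max-min LP associated with the alternating tree `A_u`
achieving objective value `ω`, the recursively defined values
`f⁺_{u,v,d}(ω)`, `f⁻_{u,v,d}(ω)` satisfy `0 ≤ x_v ≤ f⁺_{u,v,d}(ω)` for agents
`v` at level `4(r−d)+1` and `f⁻_{u,v,d}(ω) ≤ x_v ≤ min_{i∈I_v} a_{iv}⁻¹` for
agents `v` at level `4(r−d)−1`. -/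
theorem stmt_5 {V I K : Type*} [Fintype I] [DecidableEq V]
    (r : ℕ)
    (c : I → Finset V) (a : I → V → ℝ)
    (kOf : V → K) (Vk : K → Finset V)
    (hVk : ∀ k v, v ∈ Vk k ↔ kOf v = k)
    (ha : ∀ i, ∀ v ∈ c i, 0 < a i v)
    (lvl : V → ℤ)
    (hIv : ∀ v : V, (univ.filter (fun i => v ∈ c i)).Nonempty)
    (hlvlK : ∀ v w : V, kOf w = kOf v → w ≠ v → lvl v % 4 = 3 → lvl w = lvl v + 2)
    (hlvlI : ∀ i, ∀ v ∈ c i, ∀ w ∈ c i, w ≠ v → lvl v % 4 = 1 → lvl w = lvl v + 2)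
    (ω : ℝ) (hω0 : 0 ≤ ω)
    (fp fm : V → ℕ → ℝ)
    (hfp0 : ∀ v, lvl v = 4 * (r : ℤ) + 1 →
      fp v 0 = (univ.filter (fun i => v ∈ c i)).inf' (hIv v) (fun i => (a i v)⁻¹))
    (hfm : ∀ d, d ≤ r → ∀ v, lvl v = 4 * ((r : ℤ) - d) - 1 →
      fm v d = max 0 (ω - ∑ w ∈ (Vk (kOf v)).erase v, fp w d))
    (hfp : ∀ d, 1 ≤ d → d ≤ r → ∀ v, lvl v = 4 * ((r : ℤ) - d) + 1 →
      fp v d = (univ.filter (fun i => v ∈ c i)).inf' (hIv v)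
        (fun i => (a i v)⁻¹ * (1 - ∑ w ∈ (c i).erase v, a i w * fm w (d - 1))))
    (x : V → ℝ)
    (hx0 : ∀ v, 0 ≤ x v)
    (hfeas : ∀ i, ∑ v ∈ c i, a i v * x v ≤ 1)
    (hobj : ∀ k, ω ≤ ∑ v ∈ Vk k, x v) :
    ∀ d, d ≤ r →
      (∀ v, lvl v = 4 * ((r : ℤ) - d) + 1 → 0 ≤ x v ∧ x v ≤ fp v d) ∧
      (∀ v, lvl v = 4 * ((r : ℤ) - d) - 1 →
        fm v d ≤ x v ∧
        x v ≤ (univ.filter (fun i => v ∈ c i)).inf' (hIv v) (fun i => (a i v)⁻¹)) := by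
  have hxub : ∀ v : V, x v ≤ (univ.filter (fun i => v ∈ c i)).inf' (hIv v) (fun i => (a i v)⁻¹) := by
    intro v
    apply Finset.le_inf'
    intro i hi
    rw [Finset.mem_filter] at hi
    have hpos := ha i v hi.2
    have h1 : a i v * x v ≤ 1 :=
      le_trans (Finset.single_le_sum (fun w hw => mul_nonneg (ha i w hw).le (hx0 w)) hi.2) (hfeas i)
    have hinv : 0 < (a i v)⁻¹ := inv_pos.mpr hpos
    nlinarith [mul_inv_cancel₀ (ne_of_gt hpos)]
  intro d
  induction d with
  | zero =>
    intro _
    have hP : ∀ v, lvl v = 4 * ((r : ℤ) - (0:ℕ)) + 1 → 0 ≤ x v ∧ x v ≤ fp v 0 := by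
      intro v hv
      refine ⟨hx0 v, ?_⟩
      rw [hfp0 v (by push_cast at hv ⊢; omega)]
      exact hxub v
    refine ⟨hP, ?_⟩
    intro v hv
    refine ⟨?_, hxub v⟩
    rw [hfm 0 (Nat.zero_le r) v hv]
    have hmem : v ∈ Vk (kOf v) := (hVk (kOf v) v).mpr rfl
    have hsum : ω ≤ x v + ∑ w ∈ (Vk (kOf v)).erase v, x w := by
      rw [Finset.add_sum_erase _ _ hmem]; exact hobj (kOf v)
    have hle : ∑ w ∈ (Vk (kOf v)).erase v, x w ≤ ∑ w ∈ (Vk (kOf v)).erase v, fp w 0 := by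
      apply Finset.sum_le_sum
      intro w hw
      have hwk : kOf w = kOf v := (hVk (kOf v) w).mp (Finset.mem_of_mem_erase hw)
      have hwne : w ≠ v := Finset.ne_of_mem_erase hw
      have hlw := hlvlK v w hwk hwne (by omega)
      exact (hP w (by push_cast; omega)).2
    exact max_le (hx0 v) (by linarith)
  | succ d ih =>
    intro hdr
    obtain ⟨IHP, IHQ⟩ := ih (by omega)
    have hP : ∀ v, lvl v = 4 * ((r : ℤ) - (d+1:ℕ)) + 1 → 0 ≤ x v ∧ x v ≤ fp v (d+1) := by
      intro v hv
      refine ⟨hx0 v, ?_⟩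
      rw [hfp (d+1) (by omega) hdr v hv]
      apply Finset.le_inf'
      intro i hi
      rw [Finset.mem_filter] at hi
      have hpos := ha i v hi.2
      have hinv : 0 < (a i v)⁻¹ := inv_pos.mpr hpos
      have hle : ∑ w ∈ (c i).erase v, a i w * fm w (d+1-1) ≤ ∑ w ∈ (c i).erase v, a i w * x w := by
        apply Finset.sum_le_sum
        intro w hw
        have hwc : w ∈ c i := Finset.mem_of_mem_erase hw
        have hwne : w ≠ v := Finset.ne_of_mem_erase hw
        have hlw := hlvlI i v hi.2 w hwc hwne (by push_cast at hv; omega)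
        have hfmle : fm w d ≤ x w := (IHQ w (by push_cast at hv ⊢; omega)).1
        have : fm w (d+1-1) = fm w d := by norm_num
        rw [this]
        exact mul_le_mul_of_nonneg_left hfmle (ha i w hwc).le
      have h1 : a i v * x v + ∑ w ∈ (c i).erase v, a i w * x w = ∑ w ∈ c i, a i w * x w :=
        Finset.add_sum_erase (c i) (fun w => a i w * x w) hi.2
      have h2 : a i v * x v ≤ 1 - ∑ w ∈ (c i).erase v, a i w * fm w (d+1-1) := by
        have := hfeas i
        linarith
      calc x v = (a i v)⁻¹ * (a i v * x v) := by field_simp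
        _ ≤ (a i v)⁻¹ * (1 - ∑ w ∈ (c i).erase v, a i w * fm w (d+1-1)) :=
            mul_le_mul_of_nonneg_left h2 hinv.le
    refine ⟨hP, ?_⟩
    intro v hv
    refine ⟨?_, hxub v⟩
    rw [hfm (d+1) hdr v hv]
    have hmem : v ∈ Vk (kOf v) := (hVk (kOf v) v).mpr rfl
    have hsum : ω ≤ x v + ∑ w ∈ (Vk (kOf v)).erase v, x w := by
      rw [Finset.add_sum_erase _ _ hmem]; exact hobj (kOf v)
    have hle : ∑ w ∈ (Vk (kOf v)).erase v, x w ≤ ∑ w ∈ (Vk (kOf v)).erase v, fp w (d+1) := by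
      apply Finset.sum_le_sum
      intro w hw
      have hwk : kOf w = kOf v := (hVk (kOf v) w).mp (Finset.mem_of_mem_erase hw)
      have hwne : w ≠ v := Finset.ne_of_mem_erase hw
      have hlw := hlvlK v w hwk hwne (by push_cast at hv; omega)
      exact (hP w (by push_cast at hv ⊢; omega)).2
    exact max_le (hx0 v) (by linarith)
end

section
/- Fix a shift j ∈ {0,…,R−1} and define y_v(j) per agent v by writing v's layer uniquely as 4(Rc+j)+4d+e with 0 ≤ d ≤ R−1 and e ∈ {−1,1}, and setting y_v(j) = 0 if d = R−1, y_v(j) = g^-_{v,r−d} if d ≤ R−2 and e = −1, and y_v(j) = g^+_{v,r−d} if d ≤ R−2 and e = 1 (with r = R−2). Then y(j) is a feasible solution: y(j) ≥ 0 and a_{iv} y_v(j) + a_{iw} y_w(j) ≤ 1 for every constraint i with V_i = {v,w}. -/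
open Finset

/-!
Write the layer of an agent as `4(Rc+j)+4d+e`. A constraint joins a down-agent with `e = 1`
to an up-agent with `e = −1` whose digit `d` is one larger, except across a block boundary,
where it passes from `d = R−1` to `d = 0`. In the generic case the recursion defining `g⁺`
is exactly the constraint. At the top of a block (`d = R−2`) the up-agent gets `0` and
`g⁺_{v,0} ≤ a_{iv}⁻¹`; across a block boundary the down-agent gets `0` and
`g⁻_{w,r} ≤ a_{iw}⁻¹`.
-/

theorem Int.digit_succ_or_carry {R : ℕ} {c c' : ℤ} {d d' : ℕ} (hd : d < R) (hd' : d' < R)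
    (h : R * c' + d' = R * c + d + 1) : d' = d + 1 ∨ d + 1 = R ∧ d' = 0 := by
  have hR : (0 : ℤ) ≤ R := Int.natCast_nonneg R
  have hlo : c ≤ c' := by
    by_contra! hlt
    nlinarith
  have hhi : c' ≤ c + 1 := by
    by_contra! hlt
    nlinarith
  obtain rfl | rfl : c' = c ∨ c' = c + 1 := by omega
  · left; omega
  · right; constructor <;> nlinarith

theorem digits_of_layer_add_two {R : ℕ} (hR : 0 < R) {j ℓ ℓ' c c' e e' : ℤ} {d d' : ℕ}
    (hℓ : ℓ = 4 * (R * c + j) + 4 * d + e) (hd : d ≤ R - 1) (he : e = 1 ∨ e = -1)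
    (hℓ' : ℓ' = 4 * (R * c' + j) + 4 * d' + e') (hd' : d' ≤ R - 1) (he' : e' = 1 ∨ e' = -1)
    (hmod : ℓ % 4 = 1) (hstep : ℓ' = ℓ + 2) :
    e = 1 ∧ e' = -1 ∧ (d' = d + 1 ∨ d = R - 1 ∧ d' = 0) := by
  obtain rfl : e = 1 := by omega
  obtain rfl : e' = -1 := by omega
  have hcarry : R * c' + d' = R * c + d + 1 := by omega
  refine ⟨rfl, rfl, ?_⟩
  rcases Int.digit_succ_or_carry (by omega) (by omega) hcarry with h | h <;> omega

theorem mul_le_one_of_le_inf'_inv {ι : Type*} {s : Finset ι} {hs : s.Nonempty}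
    {b : ι → ℝ} {x : ℝ} (hx : x ≤ s.inf' hs fun k => (b k)⁻¹) {i : ι} (hi : i ∈ s)
    (hb : 0 < b i) : b i * x ≤ 1 := by
  rw [← le_inv_mul_iff₀ hb, mul_one]
  exact hx.trans (inf'_le _ hi)

theorem dn_mul_gp_add_up_mul_gm_le_one {V I : Type*} [Fintype I] [DecidableEq V]
    {dn up : I → V} {a : I → V → ℝ}
    {hIvne : ∀ v : V, (univ.filter (fun i => dn i = v ∨ up i = v)).Nonempty}
    {gp gm : V → ℕ → ℝ} {r : ℕ}
    (hgp : ∀ v d, 1 ≤ d → d ≤ r →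
      gp v d = (univ.filter (fun i => dn i = v ∨ up i = v)).inf' (hIvne v)
        (fun i => (a i v)⁻¹ *
          (1 - a i (if dn i = v then up i else dn i) *
            gm (if dn i = v then up i else dn i) (d - 1))))
    (i : I) {d : ℕ} (hd : 1 ≤ d) (hdr : d ≤ r) (ha : 0 < a i (dn i)) :
    a i (dn i) * gp (dn i) d + a i (up i) * gm (up i) (d - 1) ≤ 1 := by
  have hgp_le := (hgp (dn i) d hd hdr).le.trans (inf'_le _ (by simp : i ∈ _))
  simp only [if_true] at hgp_le
  linarith [(le_inv_mul_iff₀ ha).mp hgp_le]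

theorem stmt_11_general {V I K : Type*} [Fintype I] [DecidableEq V]
    (R r : ℕ) (hR : 2 ≤ R) (hr : r = R - 2)
    (j : ℕ)
    (dn up : I → V) (a : I → V → ℝ)
    (ha : ∀ i, 0 < a i (dn i) ∧ 0 < a i (up i))
    (layer : V → ℤ)
    (hlayerI : ∀ i, layer (up i) = layer (dn i) + 2 ∧ layer (dn i) % 4 = 1)
    (hIvne : ∀ v : V, (univ.filter (fun i => dn i = v ∨ up i = v)).Nonempty)
    (kOf : V → K) (Vk : K → Finset V) (s : V → ℝ)
    -- the smoothed recursion and its basic properties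
    (gp gm : V → ℕ → ℝ)
    (hgp0 : ∀ v, gp v 0 = (univ.filter (fun i => dn i = v ∨ up i = v)).inf'
      (hIvne v) (fun i => (a i v)⁻¹))
    (hgm : ∀ v d, d ≤ r →
      gm v d = max 0 (s v - ∑ w ∈ (Vk (kOf v)).erase v, gp w d))
    (hgp : ∀ v d, 1 ≤ d → d ≤ r →
      gp v d = (univ.filter (fun i => dn i = v ∨ up i = v)).inf' (hIvne v)
        (fun i => (a i v)⁻¹ *
          (1 - a i (if dn i = v then up i else dn i) *
            gm (if dn i = v then up i else dn i) (d - 1))))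
    (hgppos : ∀ v d, d ≤ r → 0 ≤ gp v d)
    (hgmr : ∀ v, gm v r ≤ (univ.filter (fun i => dn i = v ∨ up i = v)).inf'
      (hIvne v) (fun i => (a i v)⁻¹))
    -- the decomposition of layers and the definition of y(j)
    (cd : V → ℤ) (dd : V → ℕ) (ed : V → ℤ)
    (hdec : ∀ v, layer v = 4 * (R * cd v + (j : ℤ)) + 4 * dd v + ed v ∧
      dd v ≤ R - 1 ∧ (ed v = 1 ∨ ed v = -1))
    (y : V → ℝ)
    (hy : ∀ v, y v = if dd v = R - 1 then 0
      else if ed v = -1 then gm v (r - dd v) else gp v (r - dd v)) :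
    (∀ v, 0 ≤ y v) ∧
    (∀ i, a i (dn i) * y (dn i) + a i (up i) * y (up i) ≤ 1) := by
  refine ⟨fun v => ?_, fun i => ?_⟩
  · rw [hy v]
    split_ifs
    · exact le_rfl
    · exact (hgm v _ (Nat.sub_le r (dd v))).symm ▸ le_max_left 0 _
    · exact hgppos v _ (Nat.sub_le r (dd v))
  obtain ⟨hℓ, hmod⟩ := hlayerI i
  obtain ⟨hdn, hddn, hedn⟩ := hdec (dn i)
  obtain ⟨hup, hdup, hedup⟩ := hdec (up i)
  obtain ⟨hedn, hedup, hstep⟩ :=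
    digits_of_layer_add_two (by omega) hdn hddn hedn hup hdup hedup hmod hℓ
  rcases hstep with hstep | ⟨hdn_last, hup_first⟩
  · by_cases hdn_penult : dd (dn i) = R - 2
    · have hyd : y (dn i) = gp (dn i) 0 := by
        rw [hy, if_neg (by omega), if_neg (by omega), hdn_penult, hr, Nat.sub_self]
      have hyu : y (up i) = 0 := by rw [hy, if_pos (by omega)]
      rw [hyd, hyu, mul_zero, add_zero]
      exact mul_le_one_of_le_inf'_inv (hgp0 (dn i)).le (by simp) (ha i).1
    · have hyd : y (dn i) = gp (dn i) (r - dd (dn i)) := by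
        rw [hy, if_neg (by omega), if_neg (by omega)]
      have hyu : y (up i) = gm (up i) (r - dd (dn i) - 1) := by
        rw [hy, if_neg (by omega), if_pos hedup]
        congr 1
        omega
      rw [hyd, hyu]
      exact dn_mul_gp_add_up_mul_gm_le_one hgp i (by omega) (Nat.sub_le _ _) (ha i).1
  · have hyd : y (dn i) = 0 := by rw [hy, if_pos hdn_last]
    have hyu : y (up i) = gm (up i) r := by
      rw [hy, if_neg (by omega), if_pos hedup, hup_first, Nat.sub_zero]
    rw [hyd, hyu, mul_zero, zero_add]
    exact mul_le_one_of_le_inf'_inv (hgmr (up i)) (by simp) (ha i).2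

/-- Feasibility of the shifted solution `y(j)`: with the layer of each agent
`v` written uniquely as `4(Rc+j)+4d+e` (`0 ≤ d ≤ R−1`, `e ∈ {−1,1}`) and
`y_v(j) = 0` if `d = R−1`, `y_v(j) = g⁻_{v,r−d}` if `d ≤ R−2`, `e = −1`, and
`y_v(j) = g⁺_{v,r−d}` if `d ≤ R−2`, `e = 1` (where `r = R−2`), the vector
`y(j)` is nonnegative and satisfies `a_{iv} y_v(j) + a_{iw} y_w(j) ≤ 1` for
every constraint `i` with agents `V_i = {v,w}` (`v` the down-agent, `w` the
up-agent, at layers `ℓ` and `ℓ+2` with `ℓ ≡ 1 (mod 4)`). -/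
theorem stmt_11 {V I K : Type*} [Fintype I] [DecidableEq V]
    (R r : ℕ) (hR : 2 ≤ R) (hr : r = R - 2)
    (j : ℕ) (hj : j < R)
    (dn up : I → V) (a : I → V → ℝ)
    (hne : ∀ i, dn i ≠ up i)
    (ha : ∀ i, 0 < a i (dn i) ∧ 0 < a i (up i))
    (layer : V → ℤ)
    (hlayerI : ∀ i, layer (up i) = layer (dn i) + 2 ∧ layer (dn i) % 4 = 1)
    (hIvne : ∀ v : V, (univ.filter (fun i => dn i = v ∨ up i = v)).Nonempty)
    (kOf : V → K) (Vk : K → Finset V) (s : V → ℝ)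
    -- the smoothed recursion and its basic properties
    (gp gm : V → ℕ → ℝ)
    (hgp0 : ∀ v, gp v 0 = (univ.filter (fun i => dn i = v ∨ up i = v)).inf'
      (hIvne v) (fun i => (a i v)⁻¹))
    (hgm : ∀ v d, d ≤ r →
      gm v d = max 0 (s v - ∑ w ∈ (Vk (kOf v)).erase v, gp w d))
    (hgp : ∀ v d, 1 ≤ d → d ≤ r →
      gp v d = (univ.filter (fun i => dn i = v ∨ up i = v)).inf' (hIvne v)
        (fun i => (a i v)⁻¹ *
          (1 - a i (if dn i = v then up i else dn i) *
            gm (if dn i = v then up i else dn i) (d - 1))))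
    (hgppos : ∀ v d, d ≤ r → 0 ≤ gp v d)
    (hgmr : ∀ v, gm v r ≤ (univ.filter (fun i => dn i = v ∨ up i = v)).inf'
      (hIvne v) (fun i => (a i v)⁻¹))
    -- the decomposition of layers and the definition of y(j)
    (cd : V → ℤ) (dd : V → ℕ) (ed : V → ℤ)
    (hdec : ∀ v, layer v = 4 * (R * cd v + (j : ℤ)) + 4 * dd v + ed v ∧
      dd v ≤ R - 1 ∧ (ed v = 1 ∨ ed v = -1))
    (y : V → ℝ)
    (hy : ∀ v, y v = if dd v = R - 1 then 0
      else if ed v = -1 then gm v (r - dd v) else gp v (r - dd v)) :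
    (∀ v, 0 ≤ y v) ∧
    (∀ i, a i (dn i) * y (dn i) + a i (up i) * y (up i) ≤ 1) :=
  stmt_11_general R r hR hr j dn up a ha layer hlayerI hIvne kOf Vk s gp gm hgp0 hgm hgp hgppos hgmr
    cd dd ed hdec y hy
end

section
/- With y(j) as defined by the shifting strategy, for every objective k: if k is at layer ≡ 4j−4 (mod 4R) then Σ_{v∈V_k} y_v(j) = 0, and otherwise Σ_{v∈V_k} y_v(j) ≥ min_{v∈V_k} s_v. -/
open Finset

private lemma aux_zero (R m t : ℤ) (hR : 0 < R) (hm : R * m = t)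
    (h1 : -R < t) (h2 : t < R) : t = 0 := by
  rcases lt_trichotomy m 0 with h | h | h
  · nlinarith
  · rw [h, mul_zero] at hm; omega
  · nlinarith

private lemma aux_R (R m t : ℤ) (hR : 0 < R) (hm : R * m = t)
    (h1 : 0 < t) (h2 : t ≤ R) : t = R := by
  rcases lt_trichotomy m 1 with h | h | h
  · nlinarith
  · rw [h, mul_one] at hm; omega
  · nlinarith

/-- Objective values of the shifted solution `y(j)`: for every objective `k`,
if `k` is at layer `≡ 4j−4 (mod 4R)` then `Σ_{v∈V_k} y_v(j) = 0`, and
otherwise `Σ_{v∈V_k} y_v(j) ≥ min_{v∈V_k} s_v`.  Each objective `k` at layer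
`ℓ_k ≡ 0 (mod 4)` has a unique adjacent up-agent (at layer `ℓ_k − 1`), the
other adjacent agents being down-agents at layer `ℓ_k + 1`. -/
theorem stmt_12 {V K : Type*} [DecidableEq V]
    (R r : ℕ) (hR : 2 ≤ R) (hr : r = R - 2)
    (j : ℕ) (hj : j < R)
    (layer : V → ℤ)
    (kOf : V → K) (Vk : K → Finset V)
    (hVk : ∀ k v, v ∈ Vk k ↔ kOf v = k)
    (hVkne : ∀ k, (Vk k).Nonempty)
    (s : V → ℝ)
    (layerK : K → ℤ) (upk : K → V)
    (hupk : ∀ k, upk k ∈ Vk k ∧ layer (upk k) = layerK k - 1 ∧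
      ∀ w ∈ Vk k, w ≠ upk k → layer w = layerK k + 1)
    -- the smoothed recursion (only the g⁻ step is needed)
    (gp gm : V → ℕ → ℝ)
    (hgm : ∀ v d, d ≤ r →
      gm v d = max 0 (s v - ∑ w ∈ (Vk (kOf v)).erase v, gp w d))
    -- the decomposition of agent layers and the definition of y(j)
    (cd : V → ℤ) (dd : V → ℕ) (ed : V → ℤ)
    (hdec : ∀ v, layer v = 4 * (R * cd v + (j : ℤ)) + 4 * dd v + ed v ∧
      dd v ≤ R - 1 ∧ (ed v = 1 ∨ ed v = -1))
    (y : V → ℝ)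
    (hy : ∀ v, y v = if dd v = R - 1 then 0
      else if ed v = -1 then gm v (r - dd v) else gp v (r - dd v))
    -- the decomposition of objective layers
    (cK : K → ℤ) (dK : K → ℕ)
    (hdecK : ∀ k, layerK k = 4 * (R * cK k + (j : ℤ)) + 4 * dK k ∧ dK k ≤ R - 1) :
    ∀ k, (layerK k % (4 * R) = (4 * (j : ℤ) - 4) % (4 * R) →
        ∑ v ∈ Vk k, y v = 0) ∧
      (layerK k % (4 * R) ≠ (4 * (j : ℤ) - 4) % (4 * R) →
        (Vk k).inf' (hVkne k) s ≤ ∑ v ∈ Vk k, y v) := by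
  intro k
  have hRZ : (0:ℤ) < (R:ℤ) := by exact_mod_cast Nat.lt_of_lt_of_le Nat.zero_lt_two hR
  obtain ⟨hup_mem, hup_layer, hdown⟩ := hupk k
  obtain ⟨hLK, hdK⟩ := hdecK k
  -- every agent in `Vk k` has depth index `dK k`, and the sign `ed` is
  -- determined by whether it is the up-agent
  have hmatch : ∀ v ∈ Vk k, dd v = dK k ∧ (v = upk k → ed v = -1) ∧
      (v ≠ upk k → ed v = 1) := by
    intro v hv
    obtain ⟨hlv, hddv, hedv⟩ := hdec v
    by_cases hvu : v = upk k
    · have E : 4 * ((R:ℤ) * cd v + (j:ℤ)) + 4 * (dd v : ℤ) + ed v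
          = 4 * ((R:ℤ) * cK k + (j:ℤ)) + 4 * (dK k : ℤ) - 1 := by
        rw [← hlv, hvu, hup_layer, hLK]
      have h0 : (R:ℤ) * (cd v - cK k) = (dK k : ℤ) - (dd v : ℤ) := by
        rw [mul_sub]; omega
      have h1 := aux_zero (R:ℤ) (cd v - cK k) _ hRZ h0 (by omega) (by omega)
      refine ⟨by omega, fun _ => by omega, fun h => absurd hvu h⟩
    · have E : 4 * ((R:ℤ) * cd v + (j:ℤ)) + 4 * (dd v : ℤ) + ed v
          = 4 * ((R:ℤ) * cK k + (j:ℤ)) + 4 * (dK k : ℤ) + 1 := by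
        rw [← hlv, hdown v hv hvu, hLK]
      have h0 : (R:ℤ) * (cd v - cK k) = (dK k : ℤ) - (dd v : ℤ) := by
        rw [mul_sub]; omega
      have h1 := aux_zero (R:ℤ) (cd v - cK k) _ hRZ h0 (by omega) (by omega)
      refine ⟨by omega, fun h => absurd h hvu, fun _ => by omega⟩
  -- the modular condition is equivalent to `dK k = R - 1`
  have hiff : layerK k % (4 * R) = (4 * (j : ℤ) - 4) % (4 * R) ↔ dK k = R - 1 := by
    constructor
    · intro h
      have h2 : (layerK k - (4 * (j:ℤ) - 4)) % (4 * R) = 0 :=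
        Int.emod_eq_emod_iff_emod_sub_eq_zero.mp h
      obtain ⟨t, ht⟩ := Int.dvd_of_emod_eq_zero h2
      rw [hLK, mul_assoc] at ht
      have h0 : (R:ℤ) * (t - cK k) = (dK k : ℤ) + 1 := by
        rw [mul_sub]; omega
      have h1 := aux_R (R:ℤ) (t - cK k) _ hRZ h0 (by omega) (by omega)
      omega
    · intro h
      have h2 : layerK k = (4 * (j:ℤ) - 4) + (4 * (R:ℤ)) * (cK k + 1) := by
        rw [hLK]
        have : (dK k : ℤ) = (R:ℤ) - 1 := by omega
        rw [this]; ring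
      rw [h2, Int.add_mul_emod_self_left]
  by_cases hd : dK k = R - 1
  · -- degenerate case: all values are 0
    refine ⟨fun _ => ?_, fun h => absurd (hiff.mpr hd) h⟩
    apply Finset.sum_eq_zero
    intro v hv
    rw [hy v, if_pos]
    rw [(hmatch v hv).1, hd]
  · refine ⟨fun h => absurd (hiff.mp h) hd, fun _ => ?_⟩
    set e := r - dK k with he
    have hle : e ≤ r := Nat.sub_le _ _
    have hddne : ∀ v ∈ Vk k, ¬ (dd v = R - 1) := by
      intro v hv; rw [(hmatch v hv).1]; exact hd
    have hsum : ∑ v ∈ Vk k, y v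
        = gm (upk k) e + ∑ w ∈ (Vk k).erase (upk k), gp w e := by
      rw [← Finset.sum_erase_add _ _ hup_mem, add_comm]
      congr 1
      · rw [hy (upk k), if_neg (hddne _ hup_mem),
          if_pos ((hmatch _ hup_mem).2.1 rfl), (hmatch _ hup_mem).1]
      · refine Finset.sum_congr rfl fun w hw => ?_
        have hw' := Finset.mem_of_mem_erase hw
        have hwne := Finset.ne_of_mem_erase hw
        rw [hy w, if_neg (hddne _ hw'), if_neg (by
          rw [(hmatch _ hw').2.2 hwne]; norm_num), (hmatch _ hw').1]
    have hkOf : kOf (upk k) = k := (hVk k (upk k)).mp hup_mem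
    have hgmv := hgm (upk k) e hle
    rw [hkOf] at hgmv
    have hbound : s (upk k) ≤ ∑ v ∈ Vk k, y v := by
      rw [hsum, hgmv]
      have := le_max_right (0:ℝ)
        (s (upk k) - ∑ w ∈ (Vk k).erase (upk k), gp w e)
      linarith
    exact le_trans (Finset.inf'_le s hup_mem) hbound
end

section
/- Define y_v = (1/R) Σ_{j=0}^{R−1} y_v(j). Then y_v = (1/R) Σ_{d=0}^{r} g^-_{v,d} for up-agents and y_v = (1/R) Σ_{d=0}^{r} g^+_{v,d} for down-agents; y is a feasible solution; and for every objective k, Σ_{v∈V_k} y_v ≥ (1 − 1/R) min_{v∈V_k} s_v. -/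
open Finset

/-!
For a fixed agent `v`, the decomposition `layer v = 4 (R c_j + j) + 4 d_j + e` shows that
`j ↦ d_j` is injective on `{0, …, R-1}` (two shifts with the same `d` differ by a multiple of `R`),
hence a permutation of it; so averaging `y_v(j)` over the shifts averages `g_{v, r - d}` over all
`d ≠ R - 1`. Feasibility of the average is convexity of the feasible region, and the objective
bound holds because every shift except at most one contributes at least `min_{v ∈ V_k} s_v`.
-/

theorem sum_range_comp_of_injOn {M : Type*} [AddCommMonoid M] {n : ℕ} {σ : ℕ → ℕ}
    (hσ : ∀ j < n, σ j < n) (hinj : Set.InjOn σ (range n)) (f : ℕ → M) :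
    ∑ j ∈ range n, f (σ j) = ∑ j ∈ range n, f j := by
  have hmaps : Set.MapsTo σ (range n) (range n) := fun j hj =>
    mem_range.2 (hσ j (mem_range.1 hj))
  exact sum_nbij σ hmaps hinj (surjOn_of_injOn_of_card_le σ hmaps hinj le_rfl) fun _ _ => rfl

theorem sum_range_ite_last_reflect {M : Type*} [AddCommMonoid M] (r : ℕ) (g : ℕ → M) :
    ∑ d ∈ range (r + 2), (if d = r + 1 then 0 else g (r - d)) = ∑ d ∈ range (r + 1), g d := by
  rw [sum_range_succ, if_pos rfl, add_zero, ← sum_range_reflect g (r + 1)]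
  refine sum_congr rfl fun d hd => ?_
  rw [if_neg (by have := mem_range.1 hd; omega), add_tsub_cancel_right]

theorem injOn_of_layer_decomposition {R : ℕ} {L e : ℤ} {c : ℕ → ℤ} {d : ℕ → ℕ}
    (hdec : ∀ j < R, L = 4 * (R * c j + j) + 4 * d j + e) : Set.InjOn d (range R) := by
  intro i hi j hj hd
  simp only [coe_range, Set.mem_Iio] at hi hj
  have hLi := hdec i hi
  rw [hd] at hLi
  have hmod : (i : ℤ) ≡ j [ZMOD R] := Int.modEq_iff_dvd.2 ⟨c i - c j, by linarith [hdec j hj]⟩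
  exact (Int.natCast_modEq_iff.1 hmod).eq_of_lt_of_lt hi hj

theorem sum_shifts_eq {M : Type*} [AddCommMonoid M] {R r : ℕ} (hR : 2 ≤ R) (hr : r = R - 2)
    {L e : ℤ} {c : ℕ → ℤ} {d : ℕ → ℕ}
    (hdec : ∀ j < R, L = 4 * (R * c j + j) + 4 * d j + e ∧ d j ≤ R - 1) {x g : ℕ → M}
    (hx : ∀ j < R, x j = if d j = R - 1 then 0 else g (r - d j)) :
    ∑ j ∈ range R, x j = ∑ i ∈ range (r + 1), g i := by
  obtain rfl : R = r + 2 := by omega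
  calc ∑ j ∈ range (r + 2), x j
      = ∑ j ∈ range (r + 2), (fun i => if i = r + 1 then 0 else g (r - i)) (d j) :=
        sum_congr rfl fun j hj => hx j (mem_range.1 hj)
    _ = ∑ i ∈ range (r + 2), (if i = r + 1 then 0 else g (r - i)) :=
        sum_range_comp_of_injOn (fun j hj => by have := (hdec j hj).2; omega)
          (injOn_of_layer_decomposition fun j hj => (hdec j hj).1)
          (fun i => if i = r + 1 then 0 else g (r - i))
    _ = ∑ i ∈ range (r + 1), g i := sum_range_ite_last_reflect r g

theorem eq_of_four_mul_sub_four_modEq {R i j : ℕ} (hi : i < R) (hj : j < R)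
    (h : 4 * (i : ℤ) - 4 ≡ 4 * j - 4 [ZMOD 4 * R]) : i = j := by
  have h4 := h.add_right 4
  simp only [sub_add_cancel] at h4
  exact (Int.natCast_modEq_iff.1 (h4.mul_left_cancel' four_ne_zero)).eq_of_lt_of_lt hi hj

theorem nsmul_le_sum_of_le_off_subsingleton {ι M : Type*} [AddCommGroup M] [LinearOrder M]
    [IsOrderedAddMonoid M] (s : Finset ι) (p : ι → Prop) [DecidablePred p] (f : ι → M) (m : M)
    (hf : ∀ i ∈ s, 0 ≤ f i) (hp : ∀ i ∈ s, ∀ j ∈ s, p i → p j → i = j)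
    (hm : ∀ i ∈ s, ¬ p i → m ≤ f i) :
    (#s - 1) • m ≤ ∑ i ∈ s, f i := by
  rcases le_or_gt m 0 with hm0 | hm0
  · exact (nsmul_nonpos hm0 _).trans (sum_nonneg hf)
  have hbad : #(s.filter p) ≤ 1 := card_le_one.2 fun i hi j hj => by
    simp only [mem_filter] at hi hj
    exact hp i hi.1 j hj.1 hi.2 hj.2
  have hgood : #s - 1 ≤ #(s.filter fun i => ¬ p i) := by
    have := card_filter_add_card_filter_not (s := s) p
    omega
  calc (#s - 1) • m ≤ #(s.filter fun i => ¬ p i) • m := nsmul_le_nsmul_left hm0.le hgood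
    _ ≤ ∑ i ∈ s.filter fun i => ¬ p i, f i :=
        card_nsmul_le_sum _ _ _ fun i hi => hm i (mem_filter.1 hi).1 (mem_filter.1 hi).2
    _ ≤ ∑ i ∈ s, f i :=
        sum_le_sum_of_subset_of_nonneg (filter_subset _ _) fun i hi _ => hf i hi

def feasibleSet {I V : Type*} (dn up : I → V) (a : I → V → ℝ) : Set (V → ℝ) :=
  {x | (∀ v, 0 ≤ x v) ∧ ∀ i, a i (dn i) * x (dn i) + a i (up i) * x (up i) ≤ 1}

theorem convex_feasibleSet {I V : Type*} (dn up : I → V) (a : I → V → ℝ) :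
    Convex ℝ (feasibleSet dn up a) := by
  intro x hx z hz α β hα hβ hαβ
  simp only [feasibleSet, Set.mem_ofPred_eq, Pi.add_apply, Pi.smul_apply, smul_eq_mul]
  refine ⟨fun v => add_nonneg (mul_nonneg hα (hx.1 v)) (mul_nonneg hβ (hz.1 v)), fun i => ?_⟩
  nlinarith [mul_le_mul_of_nonneg_left (hx.2 i) hα, mul_le_mul_of_nonneg_left (hz.2 i) hβ]

theorem stmt_13_general {V I K : Type*}
    (R r : ℕ) (hR : 2 ≤ R) (hr : r = R - 2)
    (dn up : I → V) (a : I → V → ℝ)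
    (layer : V → ℤ)
    (Vk : K → Finset V) (hVkne : ∀ k, (Vk k).Nonempty)
    (s : V → ℝ)
    (layerK : K → ℤ)
    (gp gm : V → ℕ → ℝ)
    -- the shifted solutions y(j), their decompositions, feasibility
    -- and per-shift objective bounds
    (y : ℕ → V → ℝ)
    (cd : ℕ → V → ℤ) (dd : ℕ → V → ℕ) (ed : ℕ → V → ℤ)
    (hdec : ∀ j < R, ∀ v, layer v = 4 * (R * cd j v + (j : ℤ)) + 4 * dd j v + ed j v ∧
      dd j v ≤ R - 1 ∧ (ed j v = 1 ∨ ed j v = -1))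
    (hupdown : ∀ j < R, ∀ v, (ed j v = -1 ↔ layer v % 4 = 3))
    (hy : ∀ j < R, ∀ v, y j v = if dd j v = R - 1 then 0
      else if ed j v = -1 then gm v (r - dd j v) else gp v (r - dd j v))
    (hfeasj : ∀ j < R, (∀ v, 0 ≤ y j v) ∧
      ∀ i, a i (dn i) * y j (dn i) + a i (up i) * y j (up i) ≤ 1)
    (hobjj : ∀ j < R, ∀ k,
      (layerK k % (4 * R) = (4 * (j : ℤ) - 4) % (4 * R) → ∑ v ∈ Vk k, y j v = 0) ∧
      (layerK k % (4 * R) ≠ (4 * (j : ℤ) - 4) % (4 * R) →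
        (Vk k).inf' (hVkne k) s ≤ ∑ v ∈ Vk k, y j v))
    -- the averaged solution
    (Y : V → ℝ)
    (hY : ∀ v, Y v = (1 / (R : ℝ)) * ∑ j ∈ range R, y j v) :
    (∀ v, layer v % 4 = 3 → Y v = (1 / (R : ℝ)) * ∑ d ∈ range (r + 1), gm v d) ∧
    (∀ v, layer v % 4 = 1 → Y v = (1 / (R : ℝ)) * ∑ d ∈ range (r + 1), gp v d) ∧
    (∀ v, 0 ≤ Y v) ∧
    (∀ i, a i (dn i) * Y (dn i) + a i (up i) * Y (up i) ≤ 1) ∧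
    (∀ k, (1 - 1 / (R : ℝ)) * (Vk k).inf' (hVkne k) s ≤ ∑ v ∈ Vk k, Y v) := by
  have hRpos : (0 : ℝ) < R := Nat.cast_pos.2 (by omega)
  have hagent : ∀ v (g : ℕ → ℝ) (e : ℤ), (∀ j < R, ed j v = e) →
      (∀ j < R, y j v = if dd j v = R - 1 then 0 else g (r - dd j v)) →
      Y v = 1 / (R : ℝ) * ∑ d ∈ range (r + 1), g d := fun v g e he hg => by
    rw [hY v, sum_shifts_eq hR hr (fun j hj => ⟨he j hj ▸ (hdec j hj v).1, (hdec j hj v).2.1⟩) hg]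
  have hdown : ∀ v, layer v % 4 = 1 → ∀ j < R, ed j v = 1 := fun v h1 j hj =>
    (hdec j hj v).2.2.resolve_right fun h => by have := (hupdown j hj v).1 h; omega
  have hfeas : Y ∈ feasibleSet dn up a := by
    have hYavg : Y = ∑ j ∈ range R, (1 / (R : ℝ)) • y j := by
      funext v
      simp [hY v, Finset.sum_apply, mul_sum]
    exact hYavg ▸ (convex_feasibleSet dn up a).sum_mem (fun _ _ => by positivity)
      (by simp [hRpos.ne']) fun j hj => hfeasj j (mem_range.1 hj)
  refine ⟨fun v h3 => hagent v (gm v) (-1) (fun j hj => (hupdown j hj v).2 h3) fun j hj => ?_,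
    fun v h1 => hagent v (gp v) 1 (hdown v h1) fun j hj => ?_, hfeas.1, hfeas.2, fun k => ?_⟩
  · rw [hy j hj v, if_pos ((hupdown j hj v).2 h3)]
  · rw [hy j hj v, hdown v h1 j hj, if_neg (show (1 : ℤ) ≠ -1 by norm_num)]
  have hbound := nsmul_le_sum_of_le_off_subsingleton (range R)
    (fun j : ℕ => layerK k % (4 * R) = (4 * (j : ℤ) - 4) % (4 * R))
    (fun j => ∑ v ∈ Vk k, y j v) ((Vk k).inf' (hVkne k) s)
    (fun j hj => sum_nonneg fun v _ => (hfeasj j (mem_range.1 hj)).1 v)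
    (fun i hi j hj hpi hpj => eq_of_four_mul_sub_four_modEq (mem_range.1 hi) (mem_range.1 hj)
      (hpi.symm.trans hpj))
    (fun j hj => (hobjj j (mem_range.1 hj) k).2)
  calc (1 - 1 / (R : ℝ)) * (Vk k).inf' (hVkne k) s
      = 1 / (R : ℝ) * ((#(range R) - 1) • (Vk k).inf' (hVkne k) s) := by
        rw [card_range, nsmul_eq_mul, Nat.cast_sub (by omega), Nat.cast_one]
        field_simp
    _ ≤ 1 / (R : ℝ) * ∑ j ∈ range R, ∑ v ∈ Vk k, y j v := by gcongr
    _ = ∑ v ∈ Vk k, Y v := by simp_rw [hY, sum_comm (s := range R), mul_sum]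

/-- Averaging the shifted solutions over all shifts `j = 0,…,R−1`:
`y_v = (1/R) Σ_j y_v(j)` equals `(1/R) Σ_{d=0}^r g⁻_{v,d}` for up-agents
(layer `≡ 3 (mod 4)`) and `(1/R) Σ_{d=0}^r g⁺_{v,d}` for down-agents (layer
`≡ 1 (mod 4)`); `y` is a feasible solution; and for every objective `k`,
`Σ_{v∈V_k} y_v ≥ (1 − 1/R) min_{v∈V_k} s_v`. -/
theorem stmt_13 {V I K : Type*}
    (R r : ℕ) (hR : 2 ≤ R) (hr : r = R - 2)
    (dn up : I → V) (a : I → V → ℝ)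
    (layer : V → ℤ)
    (hlayerV : ∀ v, layer v % 4 = 1 ∨ layer v % 4 = 3)
    (Vk : K → Finset V) (hVkne : ∀ k, (Vk k).Nonempty)
    (s : V → ℝ)
    (layerK : K → ℤ) (hlayerK : ∀ k, layerK k % 4 = 0)
    (gp gm : V → ℕ → ℝ)
    -- the shifted solutions y(j), their decompositions, feasibility
    -- and per-shift objective bounds
    (y : ℕ → V → ℝ)
    (cd : ℕ → V → ℤ) (dd : ℕ → V → ℕ) (ed : ℕ → V → ℤ)
    (hdec : ∀ j < R, ∀ v, layer v = 4 * (R * cd j v + (j : ℤ)) + 4 * dd j v + ed j v ∧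
      dd j v ≤ R - 1 ∧ (ed j v = 1 ∨ ed j v = -1))
    (hupdown : ∀ j < R, ∀ v, (ed j v = -1 ↔ layer v % 4 = 3))
    (hy : ∀ j < R, ∀ v, y j v = if dd j v = R - 1 then 0
      else if ed j v = -1 then gm v (r - dd j v) else gp v (r - dd j v))
    (hfeasj : ∀ j < R, (∀ v, 0 ≤ y j v) ∧
      ∀ i, a i (dn i) * y j (dn i) + a i (up i) * y j (up i) ≤ 1)
    (hobjj : ∀ j < R, ∀ k,
      (layerK k % (4 * R) = (4 * (j : ℤ) - 4) % (4 * R) → ∑ v ∈ Vk k, y j v = 0) ∧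
      (layerK k % (4 * R) ≠ (4 * (j : ℤ) - 4) % (4 * R) →
        (Vk k).inf' (hVkne k) s ≤ ∑ v ∈ Vk k, y j v))
    -- the averaged solution
    (Y : V → ℝ)
    (hY : ∀ v, Y v = (1 / (R : ℝ)) * ∑ j ∈ range R, y j v) :
    (∀ v, layer v % 4 = 3 → Y v = (1 / (R : ℝ)) * ∑ d ∈ range (r + 1), gm v d) ∧
    (∀ v, layer v % 4 = 1 → Y v = (1 / (R : ℝ)) * ∑ d ∈ range (r + 1), gp v d) ∧
    (∀ v, 0 ≤ Y v) ∧
    (∀ i, a i (dn i) * Y (dn i) + a i (up i) * Y (up i) ≤ 1) ∧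
    (∀ k, (1 - 1 / (R : ℝ)) * (Vk k).inf' (hVkne k) s ≤ ∑ v ∈ Vk k, Y v) :=
  stmt_13_general R r hR hr dn up a layer Vk hVkne s layerK gp gm y cd dd ed hdec hupdown hy hfeasj
    hobjj Y hY
end

section
/- Let x_v = (1/(2R)) Σ_{d=0}^{r} (g^+_{v,d} + g^-_{v,d}). For each agent v let y^{↑v} be the averaged shifted solution computed with a layer assignment making v an up-agent. Then for every constraint i with V_i = {v,w}, x restricted to {v,w} equals the restriction of (y^{↑v} + y^{↑w})/2, and consequently a_{iv} x_v + a_{iw} x_w ≤ 1; hence x is a feasible solution of the max-min LP. -/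
open Finset

/-- Feasibility of the final output `x_v = (1/(2R)) Σ_{d=0}^r (g⁺_{v,d} +
g⁻_{v,d})`: for every constraint `i` with agents `V_i = {v,w}`, `x` restricted
to `{v,w}` equals the restriction of `(y^{↑v} + y^{↑w})/2`, where `y^{↑u}` is
the averaged shifted solution computed with a layer assignment making `u` an
up-agent, and consequently `a_{iv} x_v + a_{iw} x_w ≤ 1`; hence `x` is a
feasible solution of the max-min LP. -/
theorem stmt_14 {V I : Type*}
    (R r : ℕ) (hR : 2 ≤ R) (hr : r = R - 2)
    (p : I → V × V) (a : I → ℝ × ℝ)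
    (gp gm : V → ℕ → ℝ)
    (hgppos : ∀ v d, d ≤ r → 0 ≤ gp v d)
    (hgmpos : ∀ v d, d ≤ r → 0 ≤ gm v d)
    -- the averaged shifted solutions y^{↑u}
    (yup : V → V → ℝ)
    (hself : ∀ v, yup v v = (1 / (R : ℝ)) * ∑ d ∈ range (r + 1), gm v d)
    (hpartner : ∀ i,
      yup (p i).1 (p i).2 = (1 / (R : ℝ)) * ∑ d ∈ range (r + 1), gp (p i).2 d ∧
      yup (p i).2 (p i).1 = (1 / (R : ℝ)) * ∑ d ∈ range (r + 1), gp (p i).1 d)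
    (hfeasup : ∀ u i, (a i).1 * yup u (p i).1 + (a i).2 * yup u (p i).2 ≤ 1)
    -- the output of the algorithm
    (x : V → ℝ)
    (hx : ∀ v, x v = (1 / (2 * (R : ℝ))) * ∑ d ∈ range (r + 1), (gp v d + gm v d)) :
    (∀ v, 0 ≤ x v) ∧
    (∀ i, (x (p i).1 = (yup (p i).1 (p i).1 + yup (p i).2 (p i).1) / 2 ∧
           x (p i).2 = (yup (p i).1 (p i).2 + yup (p i).2 (p i).2) / 2) ∧
      (a i).1 * x (p i).1 + (a i).2 * x (p i).2 ≤ 1) := by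
  have hRpos : (0:ℝ) < R := by positivity
  have key : ∀ i, x (p i).1 = (yup (p i).1 (p i).1 + yup (p i).2 (p i).1) / 2 ∧
      x (p i).2 = (yup (p i).1 (p i).2 + yup (p i).2 (p i).2) / 2 := by
    intro i
    obtain ⟨h1, h2⟩ := hpartner i
    constructor
    · rw [hx, hself, h2, sum_add_distrib]
      ring
    · rw [hx, hself, h1, sum_add_distrib]
      ring
  refine ⟨fun v => ?_, fun i => ⟨key i, ?_⟩⟩
  · rw [hx]
    apply mul_nonneg (by positivity)
    apply sum_nonneg
    intro d hd
    have hd' := Nat.lt_succ_iff.mp (mem_range.mp hd)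
    exact add_nonneg (hgppos v d hd') (hgmpos v d hd')
  · obtain ⟨h1, h2⟩ := key i
    rw [h1, h2]
    have A := hfeasup (p i).1 i
    have B := hfeasup (p i).2 i
    linarith
end

section
/- Let x_v = (1/(2R)) Σ_{d=0}^{r} (g^+_{v,d} + g^-_{v,d}) and for each agent v let y^{↑v} be the averaged shifted solution with v as an up-agent, each satisfying Σ_{u∈V_k} y^{↑v}_u ≥ (1 − 1/R) min_{u∈V_k} s_u for every objective k. Then for every objective k, Σ_{u∈V_k} x_u ≥ (1/2)(1 − 1/R)(|V_k|/(|V_k|−1)) min_{u∈V_k} s_u. -/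
/-!
Averaging the shifted solutions `y^{↑v}` over the up-agent `v ∈ V_k`: each agent `u` contributes
`g⁻_u / R` once (as up-agent) and `g⁺_u / R` exactly `|V_k| - 1` times (as down-agent). Since
`|V_k| - 1 ≥ 1` and `g⁻ ≥ 0`, this total is at most `(|V_k| - 1) Σ_u (g⁺_u + g⁻_u) / R`,
i.e. `2 (|V_k| - 1) Σ_u x_u`, while the objective bounds make it at least
`|V_k| (1 - 1/R) min s`.
-/

open Finset

namespace Finset

variable {ι α : Type*} [DecidableEq ι]

theorem sum_sum_eq_sum_add_card_sub_one_mul_sum [CommRing α] (s : Finset ι) (a b : ι → α)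
    (y : ι → ι → α) (hdiag : ∀ v ∈ s, y v v = a v)
    (hoff : ∀ v ∈ s, ∀ w ∈ s, w ≠ v → y v w = b w) :
    ∑ v ∈ s, ∑ w ∈ s, y v w = ∑ v ∈ s, a v + (#s - 1 : α) * ∑ v ∈ s, b v := by
  have hrow : ∀ v ∈ s, ∑ w ∈ s, y v w = a v + (∑ w ∈ s, b w - b v) := by
    intro v hv
    rw [← add_sum_erase _ _ hv, hdiag v hv, ← sum_erase_eq_sub hv]
    congr 1
    exact sum_congr rfl fun w hw => hoff v hv w (mem_of_mem_erase hw) (ne_of_mem_erase hw)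
  rw [sum_congr rfl hrow, sum_add_distrib, sum_sub_distrib, sum_const, nsmul_eq_mul]
  ring

theorem card_mul_le_card_sub_one_mul_sum_add [CommRing α] [LinearOrder α] [IsStrictOrderedRing α]
    (s : Finset ι) (hs : 2 ≤ #s) (a b : ι → α) (ha : ∀ v ∈ s, 0 ≤ a v) (y : ι → ι → α)
    (hdiag : ∀ v ∈ s, y v v = a v) (hoff : ∀ v ∈ s, ∀ w ∈ s, w ≠ v → y v w = b w) (c : α)
    (hc : ∀ v ∈ s, c ≤ ∑ w ∈ s, y v w) :
    (#s : α) * c ≤ (#s - 1 : α) * ∑ v ∈ s, (a v + b v) := by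
  have hs' : (2 : α) ≤ #s := by exact_mod_cast hs
  have hA : 0 ≤ ∑ v ∈ s, a v := sum_nonneg ha
  calc (#s : α) * c = ∑ _v ∈ s, c := by rw [sum_const, nsmul_eq_mul]
    _ ≤ ∑ v ∈ s, ∑ w ∈ s, y v w := sum_le_sum hc
    _ = ∑ v ∈ s, a v + (#s - 1 : α) * ∑ v ∈ s, b v :=
      sum_sum_eq_sum_add_card_sub_one_mul_sum s a b y hdiag hoff
    _ ≤ (#s - 1 : α) * ∑ v ∈ s, (a v + b v) := by
      rw [sum_add_distrib]
      nlinarith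

end Finset

theorem stmt_15_general {V K : Type*} [DecidableEq V]
    (R r : ℕ)
    (Vk : K → Finset V) (hVkne : ∀ k, (Vk k).Nonempty)
    (hVk2 : ∀ k, 2 ≤ (Vk k).card)
    (s : V → ℝ)
    (gp gm : V → ℕ → ℝ)
    (hgmpos : ∀ v d, d ≤ r → 0 ≤ gm v d)
    (yup : V → V → ℝ)
    (hself : ∀ v, yup v v = (1 / (R : ℝ)) * ∑ d ∈ range (r + 1), gm v d)
    (hother : ∀ k, ∀ v ∈ Vk k, ∀ w ∈ Vk k, w ≠ v →
      yup v w = (1 / (R : ℝ)) * ∑ d ∈ range (r + 1), gp w d)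
    (hobj : ∀ (u : V) (k : K),
      (1 - 1 / (R : ℝ)) * (Vk k).inf' (hVkne k) s ≤ ∑ w ∈ Vk k, yup u w)
    (x : V → ℝ)
    (hx : ∀ v, x v = (1 / (2 * (R : ℝ))) * ∑ d ∈ range (r + 1), (gp v d + gm v d)) :
    ∀ k, (1 / 2) * (1 - 1 / (R : ℝ)) *
        (((Vk k).card : ℝ) / (((Vk k).card : ℝ) - 1)) * (Vk k).inf' (hVkne k) s ≤
      ∑ u ∈ Vk k, x u := by
  intro k
  set a : V → ℝ := fun v => (1 / (R : ℝ)) * ∑ d ∈ range (r + 1), gm v d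
  set b : V → ℝ := fun v => (1 / (R : ℝ)) * ∑ d ∈ range (r + 1), gp v d
  have ha : ∀ v ∈ Vk k, 0 ≤ a v := fun v _ =>
    mul_nonneg (by positivity)
      (sum_nonneg fun d hd => hgmpos v d (Nat.lt_succ_iff.mp (mem_range.mp hd)))
  have hxab : ∑ u ∈ Vk k, x u = (1 / 2) * ∑ u ∈ Vk k, (a u + b u) := by
    rw [mul_sum]
    refine sum_congr rfl fun u _ => ?_
    simp only [hx, a, b, sum_add_distrib]
    ring
  have key := card_mul_le_card_sub_one_mul_sum_add (Vk k) (hVk2 k) a b ha yup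
    (fun v _ => hself v) (hother k) _ (fun v _ => hobj v k)
  have hcard : (0 : ℝ) < (Vk k).card - 1 := by
    have : (2 : ℝ) ≤ (Vk k).card := by exact_mod_cast hVk2 k
    linarith
  calc (1 / 2) * (1 - 1 / (R : ℝ)) * (((Vk k).card : ℝ) / (((Vk k).card : ℝ) - 1)) *
        (Vk k).inf' (hVkne k) s
      = (1 / 2) * (((Vk k).card * ((1 - 1 / (R : ℝ)) * (Vk k).inf' (hVkne k) s)) /
          (((Vk k).card : ℝ) - 1)) := by ring
    _ ≤ ∑ u ∈ Vk k, x u := by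
      rw [hxab]
      gcongr
      exact (div_le_iff₀' hcard).2 key

/-- Objective bound for the final output `x_v = (1/(2R)) Σ_{d=0}^r (g⁺_{v,d} +
g⁻_{v,d})`: if each averaged shifted solution `y^{↑v}` (with `v` as an
up-agent, so that the other agents of each objective of `v` are down-agents)
satisfies `Σ_{u∈V_k} y^{↑v}_u ≥ (1 − 1/R) min_{u∈V_k} s_u` for every objective
`k`, then for every objective `k`,
`Σ_{u∈V_k} x_u ≥ (1/2)(1 − 1/R)(|V_k|/(|V_k|−1)) min_{u∈V_k} s_u`. -/
theorem stmt_15 {V K : Type*} [DecidableEq V]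
    (R r : ℕ) (hR : 2 ≤ R) (hr : r = R - 2)
    (Vk : K → Finset V) (hVkne : ∀ k, (Vk k).Nonempty)
    (hVk2 : ∀ k, 2 ≤ (Vk k).card)
    (s : V → ℝ)
    (gp gm : V → ℕ → ℝ)
    (hgppos : ∀ v d, d ≤ r → 0 ≤ gp v d)
    (hgmpos : ∀ v d, d ≤ r → 0 ≤ gm v d)
    (yup : V → V → ℝ)
    (hself : ∀ v, yup v v = (1 / (R : ℝ)) * ∑ d ∈ range (r + 1), gm v d)
    (hother : ∀ k, ∀ v ∈ Vk k, ∀ w ∈ Vk k, w ≠ v →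
      yup v w = (1 / (R : ℝ)) * ∑ d ∈ range (r + 1), gp w d)
    (hobj : ∀ (u : V) (k : K),
      (1 - 1 / (R : ℝ)) * (Vk k).inf' (hVkne k) s ≤ ∑ w ∈ Vk k, yup u w)
    (x : V → ℝ)
    (hx : ∀ v, x v = (1 / (2 * (R : ℝ))) * ∑ d ∈ range (r + 1), (gp v d + gm v d)) :
    ∀ k, (1 / 2) * (1 - 1 / (R : ℝ)) *
        (((Vk k).card : ℝ) / (((Vk k).card : ℝ) - 1)) * (Vk k).inf' (hVkne k) s ≤
      ∑ u ∈ Vk k, x u :=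
  stmt_15_general R r Vk hVkne hVk2 s gp gm hgmpos yup hself hother hobj x hx
end
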